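/- Let (V, g, J, ω) be a 4-dimensional almost Hermitian vector space with |ω|² = 2, and let α be a nonzero J-anti-invariant 2-form. Define Jα by (Jα)(X,Y) = −α(JX,Y). For real numbers f, r with 2f² + r²|α|² = 2, set ω̃ = fω + rJα and let J̃ be the almost complex structure determined by g and ω̃ (via g(J̃u, v) = ω̃(u,v)). Then α is J̃-anti-invariant. -/

import Mathlib

/-!
Let `K` be the skew endomorphism with `g(K u, v) = α(u, v)`. A 2-form is anti-invariant under an
orthogonal complex structure exactly when its endomorphism anticommutes with it, so `KJ = -JK`.
Then `u, Ju, Ku, JKu` are pairwise orthogonal for every `u`, and in dimension 4 this forces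
`K² u ∥ u`, hence `K² = a • 1` with `|α|² = -2a`. Finally `J̃ = fJ + rJK` anticommutes with `K`,
and `J̃² = -(f² - r² a) = -1` is exactly the normalisation `2f² + r²|α|² = 2`.
-/

open scoped RealInnerProductSpace
open Module

noncomputable section

abbrev Form2 (V : Type*) [AddCommGroup V] [Module ℝ V] := AlternatingMap ℝ V ℝ (Fin 2)
abbrev Form4 (V : Type*) [AddCommGroup V] [Module ℝ V] := AlternatingMap ℝ V ℝ (Fin 4)

def wedge {V : Type*} [AddCommGroup V] [Module ℝ V] (α β : Form2 V) : Form4 V :=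
  ((TensorProduct.lid ℝ ℝ).toLinearMap.compAlternatingMap (α.domCoprod β)).domDomCongr finSumFinEquiv

def ip {V : Type*} [NormedAddCommGroup V] [InnerProductSpace ℝ V] [FiniteDimensional ℝ V]
    (α β : Form2 V) : ℝ :=
  (1/2) * ∑ i, ∑ j, α ![stdOrthonormalBasis ℝ V i, stdOrthonormalBasis ℝ V j] *
    β ![stdOrthonormalBasis ℝ V i, stdOrthonormalBasis ℝ V j]

def Jact {V : Type*} [AddCommGroup V] [Module ℝ V] (J : V →ₗ[ℝ] V) :
    Form2 V →ₗ[ℝ] Form2 V where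
  toFun α := α.compLinearMap J
  map_add' α β := by ext v; simp
  map_smul' c α := by ext v; simp

open LinearMap (IsSkewAdjoint)

section SkewAdjoint

variable {V : Type*} [NormedAddCommGroup V] [InnerProductSpace ℝ V] {J K : V →ₗ[ℝ] V}

theorem isSkewAdjoint_innerₗ_iff :
    IsSkewAdjoint (innerₗ V) K ↔ ∀ u v, ⟪K u, v⟫ = -⟪u, K v⟫ := by
  simp only [IsSkewAdjoint, LinearMap.IsAdjointPair, innerₗ_apply_apply, Pi.neg_apply,
    inner_neg_right]

theorem inner_self_apply_eq_zero_of_isSkewAdjoint (hK : IsSkewAdjoint (innerₗ V) K) (u : V) :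
    ⟪u, K u⟫ = 0 := by
  have := isSkewAdjoint_innerₗ_iff.1 hK u u
  rw [real_inner_comm] at this
  linarith

theorem isSkewAdjoint_of_sq_eq_neg_of_inner_map_map (hJ2 : ∀ v, J (J v) = -v)
    (hJ : ∀ u v, ⟪J u, J v⟫ = ⟪u, v⟫) : IsSkewAdjoint (innerₗ V) J :=
  isSkewAdjoint_innerₗ_iff.2 fun u v => by
    rw [← hJ u (J v), hJ2, inner_neg_right, neg_neg]

theorem isSkewAdjoint_comp_of_anticomm (hJ : IsSkewAdjoint (innerₗ V) J)
    (hK : IsSkewAdjoint (innerₗ V) K) (hKJ : ∀ u, K (J u) = -J (K u)) :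
    IsSkewAdjoint (innerₗ V) (J ∘ₗ K) := by
  rw [isSkewAdjoint_innerₗ_iff] at hJ hK ⊢
  intro u v
  simp only [LinearMap.comp_apply]
  rw [hJ, hK, hKJ, inner_neg_right, neg_neg]

end SkewAdjoint

section Anticommuting

variable {V : Type*} [NormedAddCommGroup V] [InnerProductSpace ℝ V] {J K : V →ₗ[ℝ] V}

theorem norm_sq_smul_apply_apply_of_anticomm (h4 : finrank ℝ V = 4)
    (hJ : IsSkewAdjoint (innerₗ V) J) (hJ2 : ∀ v, J (J v) = -v)
    (hK : IsSkewAdjoint (innerₗ V) K) (hKJ : ∀ u, K (J u) = -J (K u)) (u : V) :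
    ‖u‖ ^ 2 • K (K u) = -(‖K u‖ ^ 2 • u) := by
  have hJK := isSkewAdjoint_comp_of_anticomm hJ hK hKJ
  have hJ0 := inner_self_apply_eq_zero_of_isSkewAdjoint hJ
  have hK0 := inner_self_apply_eq_zero_of_isSkewAdjoint hK
  have hJK0 := inner_self_apply_eq_zero_of_isSkewAdjoint hJK
  simp only [LinearMap.comp_apply] at hJK0
  rw [isSkewAdjoint_innerₗ_iff] at hJ hK
  have hJK_perp : ∀ x : V, ⟪J x, K x⟫ = 0 := fun x => by rw [hJ, hJK0, neg_zero]
  rcases eq_or_ne u 0 with rfl | hu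
  · simp
  rcases eq_or_ne (K u) 0 with hKu | hKu
  · simp [hKu]
  set w := ‖u‖ ^ 2 • K (K u) + ‖K u‖ ^ 2 • u with hw
  suffices w = 0 by rwa [← eq_neg_iff_add_eq_zero] at this
  -- otherwise `u, Ju, Ku, JKu, w` are five nonzero pairwise orthogonal vectors in dimension 4
  by_contra hw0
  have hKKu : ⟪u, K (K u)⟫ = -‖K u‖ ^ 2 := by
    rw [← neg_eq_iff_eq_neg, ← hK, real_inner_self_eq_norm_sq]
  have hJuKKu : ⟪J u, K (K u)⟫ = 0 := by
    rw [← neg_neg ⟪J u, _⟫, ← hK, hKJ, inner_neg_left, neg_neg, hJ, hJ0, neg_zero]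
  have hJuJKu : ⟪J u, J (K u)⟫ = 0 := by
    rw [hJ, hJ2, inner_neg_right, neg_neg, hK0]
  let e : Fin 5 → V := ![u, J u, K u, J (K u), w]
  have horth_lt : ∀ i j, i < j → ⟪e i, e j⟫ = 0 := by
    intro i j hij
    fin_cases i <;> fin_cases j <;> first
      | exact absurd hij (by decide)
      | simp [e, hw, inner_add_right, real_inner_smul_right, real_inner_comm u, hJ0, hK0, hJK0,
          hJK_perp, hKKu, hJuKKu, hJuJKu, mul_comm]
  have horth : Pairwise fun i j => ⟪e i, e j⟫ = 0 := fun i j hij => by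
    rcases hij.lt_or_gt with h | h
    · exact horth_lt i j h
    · rw [real_inner_comm]; exact horth_lt j i h
  have hJ_ne : ∀ x, x ≠ 0 → J x ≠ 0 := fun x hx hJx => hx (by simpa [hJx] using hJ2 x)
  have hne : ∀ i, e i ≠ 0 := by
    intro i; fin_cases i
    exacts [hu, hJ_ne u hu, hKu, hJ_ne _ hKu, hw0]
  have := Module.finite_of_finrank_eq_succ h4
  have := (linearIndependent_of_ne_zero_of_inner_eq_zero hne horth).fintype_card_le_finrank
  simp [h4] at this

theorem exists_comp_self_eq_smul_of_anticomm (h4 : finrank ℝ V = 4)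
    (hJ : IsSkewAdjoint (innerₗ V) J) (hJ2 : ∀ v, J (J v) = -v)
    (hK : IsSkewAdjoint (innerₗ V) K) (hKJ : ∀ u, K (J u) = -J (K u)) :
    ∃ a : ℝ, K ∘ₗ K = a • 1 := by
  refine LinearMap.exists_eq_smul_id_of_forall_notLinearIndependent fun v hli => ?_
  rcases eq_or_ne v 0 with rfl | hv
  · exact hli.ne_zero 0 rfl
  have hdep := norm_sq_smul_apply_apply_of_anticomm h4 hJ hJ2 hK hKJ v
  have := LinearIndependent.pair_iff.1 hli (‖K v‖ ^ 2) (‖v‖ ^ 2) (by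
    rw [LinearMap.comp_apply, hdep, add_neg_cancel])
  simp_all

end Anticommuting

namespace Form2

variable {V : Type*} [NormedAddCommGroup V] [InnerProductSpace ℝ V]

theorem apply_swap (β : Form2 V) (u v : V) : β ![v, u] = -β ![u, v] := by
  have h := β.map_swap ![u, v] (i := 0) (j := 1) (by decide)
  have : ![u, v] ∘ Equiv.swap (0 : Fin 2) 1 = ![v, u] := by
    ext i; fin_cases i <;> simp
  rwa [this] at h

theorem isSkewAdjoint_of_inner_eq {T : V →ₗ[ℝ] V} (β : Form2 V)
    (hT : ∀ u v, ⟪T u, v⟫ = β ![u, v]) : IsSkewAdjoint (innerₗ V) T :=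
  isSkewAdjoint_innerₗ_iff.2 fun u v => by
    rw [hT, real_inner_comm, hT, apply_swap β v u]

variable [FiniteDimensional ℝ V]

def toBilin (α : Form2 V) : V →ₗ[ℝ] V →ₗ[ℝ] ℝ :=
  LinearMap.mk₂ ℝ (fun u v => α ![u, v]) (fun _ _ _ => α.map_vecCons_add _ _ _)
    (fun _ _ _ => α.map_vecCons_smul _ _ _)
    (fun u _ _ => (α.curryLeft u).map_vecCons_add _ _ _)
    (fun _ u _ => (α.curryLeft u).map_vecCons_smul _ _ _)

def toEnd (α : Form2 V) : V →ₗ[ℝ] V :=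
  InnerProductSpace.continuousLinearMapOfBilin (toBilin α).toContinuousBilinearMap

theorem inner_toEnd (α : Form2 V) (u v : V) : ⟪toEnd α u, v⟫ = α ![u, v] :=
  InnerProductSpace.continuousLinearMapOfBilin_apply _ u v

theorem isSkewAdjoint_toEnd (α : Form2 V) : IsSkewAdjoint (innerₗ V) (toEnd α) :=
  isSkewAdjoint_of_inner_eq α (inner_toEnd α)

theorem antiInvariant_iff_toEnd_anticomm (α : Form2 V) {T : V →ₗ[ℝ] V}
    (hT : IsSkewAdjoint (innerₗ V) T) (hT2 : ∀ v, T (T v) = -v) :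
    (∀ u v, α ![T u, T v] = -α ![u, v]) ↔ ∀ u, toEnd α (T u) = -T (toEnd α u) := by
  rw [isSkewAdjoint_innerₗ_iff] at hT
  have key : ∀ u v, ⟪T (toEnd α u), T v⟫ = ⟪toEnd α u, v⟫ := fun u v => by
    rw [hT, hT2, inner_neg_right, neg_neg]
  simp only [← inner_toEnd]
  constructor
  · intro h u
    have hsurj : ∀ v, T (-T v) = v := fun v => by rw [map_neg, hT2, neg_neg]
    refine ext_inner_right ℝ fun v => ?_
    rw [← hsurj v, h, inner_neg_left, key]
  · intro h u v
    rw [h, inner_neg_left, key]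

theorem ip_self_eq_of_toEnd_comp_self (α : Form2 V) {a : ℝ}
    (ha : toEnd α ∘ₗ toEnd α = a • 1) : ip α α = -(finrank ℝ V * a) / 2 := by
  set b := stdOrthonormalBasis ℝ V with hb
  have hK := isSkewAdjoint_innerₗ_iff.1 (isSkewAdjoint_toEnd α)
  have hsq : ∀ i, ⟪toEnd α (b i), toEnd α (b i)⟫ = -a := fun i => by
    rw [hK, ← LinearMap.comp_apply, ha, LinearMap.smul_apply, Module.End.one_apply,
      real_inner_smul_right, real_inner_self_eq_norm_sq, b.orthonormal.1 i]
    ring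
  calc ip α α = (1 / 2) * ∑ i, ∑ j, ⟪toEnd α (b i), b j⟫ * ⟪b j, toEnd α (b i)⟫ := by
        rw [ip, ← hb]
        simp only [← inner_toEnd, real_inner_comm (toEnd α _) (b _)]
    _ = (1 / 2) * ∑ i, ⟪toEnd α (b i), toEnd α (b i)⟫ := by
        simp only [b.sum_inner_mul_inner]
    _ = -(finrank ℝ V * a) / 2 := by
        simp only [hsq, Finset.sum_const, Finset.card_univ, Fintype.card_fin, nsmul_eq_mul]
        ring

end Form2

section Deformation

variable {M : Type*} [AddCommGroup M] [Module ℝ M] {J K T : M →ₗ[ℝ] M} {f r : ℝ}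

theorem anticomm_of_eq_smul_add_smul (hKJ : ∀ u, K (J u) = -J (K u))
    (hT : ∀ u, T u = f • J u + r • J (K u)) (u : M) : K (T u) = -T (K u) := by
  rw [hT, hT, map_add, map_smul, map_smul, hKJ, hKJ]
  module

theorem apply_apply_eq_neg_of_eq_smul_add_smul (hJ2 : ∀ v, J (J v) = -v)
    (hKJ : ∀ u, K (J u) = -J (K u)) {a : ℝ} (ha : K ∘ₗ K = a • 1)
    (hfr : f ^ 2 - r ^ 2 * a = 1) (hT : ∀ u, T u = f • J u + r • J (K u)) (u : M) :
    T (T u) = -u := by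
  have hKK : ∀ v, K (K v) = a • v := fun v => by simpa using LinearMap.congr_fun ha v
  rw [hT (T u), anticomm_of_eq_smul_add_smul hKJ hT, hT u, hT (K u)]
  simp only [map_add, map_smul, map_neg, hJ2, hKK]
  linear_combination (norm := module) -(hfr • u)

end Deformation

theorem alpha_is_antiinvariant_for_deformed_acs_general
    {V : Type*} [NormedAddCommGroup V] [InnerProductSpace ℝ V]
    [FiniteDimensional ℝ V] (h4 : finrank ℝ V = 4)
    (J : V →ₗ[ℝ] V) (hJ2 : ∀ v, J (J v) = -v)
    (hJorth : ∀ u v : V, ⟪J u, J v⟫ = ⟪u, v⟫)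
    (ω : Form2 V) (hω : ∀ u v : V, ω ![u, v] = ⟪J u, v⟫)
    (α : Form2 V) (hα : ∀ u v : V, α ![J u, J v] = - α ![u, v])
    (Jα : Form2 V) (hJα : ∀ u v : V, Jα ![u, v] = - α ![J u, v])
    (f r : ℝ) (hnorm : 2 * f ^ 2 + r ^ 2 * ip α α = 2)
    (Jt : V →ₗ[ℝ] V)
    (hJt : ∀ u v : V, ⟪Jt u, v⟫ = (f • ω + r • Jα) ![u, v]) :
    ∀ u v : V, α ![Jt u, Jt v] = - α ![u, v] := by
  set K := Form2.toEnd α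
  have hJ := isSkewAdjoint_of_sq_eq_neg_of_inner_map_map hJ2 hJorth
  have hKJ := (α.antiInvariant_iff_toEnd_anticomm hJ hJ2).1 hα
  obtain ⟨a, ha⟩ := exists_comp_self_eq_smul_of_anticomm h4 hJ hJ2 α.isSkewAdjoint_toEnd hKJ
  have hfr : f ^ 2 - r ^ 2 * a = 1 := by
    rw [α.ip_self_eq_of_toEnd_comp_self ha, h4] at hnorm
    linear_combination hnorm / 2
  have hJt_eq : ∀ u, Jt u = f • J u + r • J (K u) := fun u => ext_inner_right ℝ fun v => by
    rw [hJt, AlternatingMap.add_apply, AlternatingMap.smul_apply, AlternatingMap.smul_apply, hω,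
      hJα, ← α.inner_toEnd, hKJ]
    simp only [inner_add_left, real_inner_smul_left, inner_neg_left, smul_eq_mul]
    ring
  refine (α.antiInvariant_iff_toEnd_anticomm (Form2.isSkewAdjoint_of_inner_eq _ hJt) ?_).2
    (anticomm_of_eq_smul_add_smul hKJ hJt_eq)
  exact apply_apply_eq_neg_of_eq_smul_add_smul hJ2 hKJ ha hfr hJt_eq

theorem alpha_is_antiinvariant_for_deformed_acs
    {V : Type*} [NormedAddCommGroup V] [InnerProductSpace ℝ V]
    [FiniteDimensional ℝ V] (h4 : finrank ℝ V = 4)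
    (J : V →ₗ[ℝ] V) (hJ2 : ∀ v, J (J v) = -v)
    (hJorth : ∀ u v : V, ⟪J u, J v⟫ = ⟪u, v⟫)
    (ω : Form2 V) (hω : ∀ u v : V, ω ![u, v] = ⟪J u, v⟫)
    (hω2 : ip ω ω = 2)
    (α : Form2 V) (hα : ∀ u v : V, α ![J u, J v] = - α ![u, v]) (hαne : α ≠ 0)
    (Jα : Form2 V) (hJα : ∀ u v : V, Jα ![u, v] = - α ![J u, v])
    (f r : ℝ) (hnorm : 2 * f ^ 2 + r ^ 2 * ip α α = 2)
    (Jt : V →ₗ[ℝ] V)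
    (hJt : ∀ u v : V, ⟪Jt u, v⟫ = (f • ω + r • Jα) ![u, v]) :
    ∀ u v : V, α ![Jt u, Jt v] = - α ![u, v] :=
  alpha_is_antiinvariant_for_deformed_acs_general h4 J hJ2 hJorth ω hω α hα Jα hJα f r hnorm Jt hJt
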